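/- arXiv:1109.6340 — 10 statements merged into one kernel-verified Lean document; each statement's English description precedes it below -/
import Mathlib

section
/- A deal δ = (A, A') is individually rational (i.e., there exists a payment function p : 𝒜 → ℝ with Σᵢ p(i) = 0 such that uᵢ(A'(i)) − uᵢ(A(i)) > p(i) for all agents i, except possibly p(i) = 0 for agents with A(i) = A'(i)) if and only if sw_u(A) < sw_u(A'), where sw_u(A) = Σᵢ uᵢ(A(i)) is utilitarian social welfare. -/
/-!
Summing the payment inequalities over all agents shows that the total gain in welfare exceeds
the total payment `0`, strictly because some agent's bundle changes. Conversely, if welfare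
increases, let every agent pay its own gain minus the average gain.
-/

variable {Agent Res : Type*} [Fintype Agent] [Fintype Res] [DecidableEq Agent] [Nonempty Agent]

/-- The bundle of resources held by agent `i` under allocation (holder map) `f`. -/
def bundle (f : Res → Agent) (i : Agent) : Finset Res :=
  Finset.univ.filter fun r => f r = i

/-- Utilitarian social welfare. -/
def swu (u : Agent → Finset Res → ℝ) (f : Res → Agent) : ℝ :=
  ∑ i, u i (bundle f i)

omit [Fintype Agent] [Nonempty Agent] in
theorem mem_bundle {f : Res → Agent} {i : Agent} {r : Res} : r ∈ bundle f i ↔ f r = i := by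
  simp [bundle]

omit [Fintype Agent] [Nonempty Agent] in
theorem bundle_injective : Function.Injective (bundle : (Res → Agent) → Agent → Finset Res) := by
  intro f g h
  funext r
  have hr : r ∈ bundle g (f r) := h ▸ mem_bundle.2 rfl
  exact (mem_bundle.1 hr).symm

omit [Nonempty Agent] in
theorem swu_sub_swu (u : Agent → Finset Res → ℝ) (A A' : Res → Agent) :
    swu u A' - swu u A = ∑ i, (u i (bundle A' i) - u i (bundle A i)) :=
  (Finset.sum_sub_distrib _ _).symm

theorem exists_sum_eq_zero_forall_lt_of_sum_pos {ι : Type*} [Fintype ι] [Nonempty ι]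
    {g : ι → ℝ} (hg : 0 < ∑ i, g i) :
    ∃ p : ι → ℝ, ∑ i, p i = 0 ∧ ∀ i, p i < g i := by
  have hcard : (0 : ℝ) < Fintype.card ι := by exact_mod_cast Fintype.card_pos
  refine ⟨fun i => g i - (∑ j, g j) / Fintype.card ι, ?_, fun i => ?_⟩
  · rw [Finset.sum_sub_distrib, Finset.sum_const, Finset.card_univ, nsmul_eq_mul,
      mul_div_cancel₀ _ hcard.ne', sub_self]
  · linarith [div_pos hg hcard]

/-- A deal (A, A') is individually rational (there is a payment function `p` summing to 0
with `uᵢ(A') − uᵢ(A) > p i` for all agents, except possibly `p i = 0` for agents whose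
bundle does not change) iff utilitarian social welfare strictly increases. -/
theorem stmt0 (u : Agent → Finset Res → ℝ) (A A' : Res → Agent) (hne : A ≠ A') :
    (∃ p : Agent → ℝ, (∑ i, p i) = 0 ∧
      ∀ i, u i (bundle A' i) - u i (bundle A i) > p i ∨
        (bundle A i = bundle A' i ∧ p i = 0)) ↔ swu u A < swu u A' := by
  rw [← sub_pos, swu_sub_swu]
  constructor
  · rintro ⟨p, hsum, hp⟩
    obtain ⟨i₀, hi₀⟩ := Function.ne_iff.1 (bundle_injective.ne hne)
    have hle : ∀ i ∈ Finset.univ, p i ≤ u i (bundle A' i) - u i (bundle A i) := by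
      intro i _
      rcases hp i with hlt | ⟨hb, hp0⟩
      · exact hlt.le
      · rw [hp0, hb, sub_self]
    have hlt : p i₀ < u i₀ (bundle A' i₀) - u i₀ (bundle A i₀) :=
      (hp i₀).resolve_right fun h => hi₀ h.1
    simpa [hsum] using Finset.sum_lt_sum hle ⟨i₀, Finset.mem_univ _, hlt⟩
  · intro hgain
    obtain ⟨p, hsum, hp⟩ := exists_sum_eq_zero_forall_lt_of_sum_pos hgain
    exact ⟨p, hsum, fun i => Or.inl (hp i)⟩
end

section
/- Fix finite sets of agents 𝒜 and resources ℛ, and let δ = (A, A') be any deal that is not independently decomposable. Then there exist dichotomous utility functions (uᵢ)_{i∈𝒜} (each uᵢ takes only values 0 and 1) such that sw_u(A') = |𝒜|, sw_u(A) = |𝒜| − 1, and sw_u(B) ≤ sw_u(A) for every allocation B ∉ {A, A'}; consequently δ is the unique deal increasing utilitarian social welfare from A. -/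
/-!
Pick an agent `i₀` whose bundle changes in the deal. Every agent gets utility 1 from its bundle in
`A'`, every agent other than `i₀` also from its bundle in `A`, and 0 from anything else; so `A'`
satisfies everyone and `A` everyone but `i₀`. An allocation `B` satisfying everyone gives each agent its bundle from
`A` or from `A'`, so no agent changes its bundle both from `A` to `B` and from `B` to `A'`: unless
`B ∈ {A, A'}`, this decomposes the deal independently. Hence every other allocation leaves someone
with utility 0.
-/

variable {Agent Res : Type*} [Fintype Agent] [Fintype Res] [DecidableEq Agent] [DecidableEq Res]

def involved (f g : Res → Agent) : Finset Agent :=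
  Finset.univ.filter fun i => bundle f i ≠ bundle g i

def IndDecomp (f g : Res → Agent) : Prop :=
  ∃ B : Res → Agent, B ≠ f ∧ B ≠ g ∧ Disjoint (involved f B) (involved B g)

open Finset

omit [Fintype Agent] [DecidableEq Res] in
theorem exists_bundle_ne_of_ne {A A' : Res → Agent} (hne : A ≠ A') :
    ∃ i, bundle A i ≠ bundle A' i := by
  obtain ⟨r, hr⟩ := Function.ne_iff.mp hne
  refine ⟨A r, fun h => hr ?_⟩
  have hmem : r ∈ bundle A' (A r) := h ▸ by simp [bundle]
  simpa [bundle, eq_comm] using hmem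

theorem indDecomp_of_forall_bundle_eq_or {A A' B : Res → Agent} (hBA : B ≠ A) (hBA' : B ≠ A')
    (hB : ∀ i, bundle B i = bundle A i ∨ bundle B i = bundle A' i) : IndDecomp A A' := by
  refine ⟨B, hBA, hBA', disjoint_left.mpr fun i hAB hBA'' => ?_⟩
  simp only [involved, mem_filter, mem_univ, true_and] at hAB hBA''
  rcases hB i with h | h
  · exact hAB h.symm
  · exact hBA'' h

def IsDichotomous (u : Agent → Finset Res → ℝ) : Prop :=
  ∀ i R, u i R = 0 ∨ u i R = 1

omit [DecidableEq Res] in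
theorem swu_eq_card_sub_card_filter {u : Agent → Finset Res → ℝ} (hu : IsDichotomous u)
    (f : Res → Agent) :
    swu u f = Fintype.card Agent - #{i | u i (bundle f i) = 0} := by
  have hterm : ∀ i, u i (bundle f i) = 1 - if u i (bundle f i) = 0 then 1 else 0 := by
    intro i
    rcases hu i (bundle f i) with h | h <;> simp [h]
  rw [swu, Finset.sum_congr rfl fun i _ => hterm i, sum_sub_distrib, sum_boole]
  simp

def dealUtility (A A' : Res → Agent) (i₀ : Agent) (i : Agent) (R : Finset Res) : ℝ :=
  if R = bundle A' i ∨ (i ≠ i₀ ∧ R = bundle A i) then 1 else 0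

section dealUtility

variable (A A' : Res → Agent) (i₀ : Agent)

omit [Fintype Agent] in
theorem dealUtility_isDichotomous : IsDichotomous (dealUtility A A' i₀) := by
  intro i R
  unfold dealUtility
  split_ifs <;> simp

omit [Fintype Agent] in
theorem dealUtility_eq_zero_iff (i : Agent) (R : Finset Res) :
    dealUtility A A' i₀ i R = 0 ↔ ¬(R = bundle A' i ∨ (i ≠ i₀ ∧ R = bundle A i)) := by
  unfold dealUtility
  split_ifs <;> simp_all

theorem filter_dealUtility_target_eq_empty :
    ({i | dealUtility A A' i₀ i (bundle A' i) = 0} : Finset Agent) = ∅ := by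
  simp [dealUtility_eq_zero_iff]

theorem filter_dealUtility_source_eq_singleton (hi₀ : bundle A i₀ ≠ bundle A' i₀) :
    ({i | dealUtility A A' i₀ i (bundle A i) = 0} : Finset Agent) = {i₀} := by
  ext i
  by_cases h : i = i₀ <;> simp [dealUtility_eq_zero_iff, h, hi₀]

theorem exists_dealUtility_eq_zero (hnd : ¬IndDecomp A A') {B : Res → Agent} (hBA : B ≠ A)
    (hBA' : B ≠ A') : ∃ j, dealUtility A A' i₀ j (bundle B j) = 0 := by
  by_contra! h
  refine hnd (indDecomp_of_forall_bundle_eq_or hBA hBA' fun i => ?_)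
  have := (dealUtility_eq_zero_iff A A' i₀ i (bundle B i)).not.mp (h i)
  tauto

end dealUtility

/-- Necessary deals with side payments (dichotomous case): for every deal that is not
independently decomposable there are dichotomous utility functions with
`sw_u(A') = |𝒜|`, `sw_u(A) = |𝒜| − 1`, all other allocations at most `sw_u(A)`,
so the deal is the unique deal increasing utilitarian social welfare from `A`. -/
theorem stmt3 (A A' : Res → Agent) (hne : A ≠ A') (hnd : ¬ IndDecomp A A') :
    ∃ u : Agent → Finset Res → ℝ,
      (∀ i, ∀ R : Finset Res, u i R = 0 ∨ u i R = 1) ∧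
      swu u A' = (Fintype.card Agent : ℝ) ∧
      swu u A = (Fintype.card Agent : ℝ) - 1 ∧
      (∀ B : Res → Agent, B ≠ A → B ≠ A' → swu u B ≤ swu u A) ∧
      (∀ B : Res → Agent, swu u A < swu u B → B = A') := by
  obtain ⟨i₀, hi₀⟩ := exists_bundle_ne_of_ne hne
  have hdich := dealUtility_isDichotomous A A' i₀
  have hswu := swu_eq_card_sub_card_filter hdich
  have hA : swu (dealUtility A A' i₀) A = Fintype.card Agent - 1 := by
    rw [hswu, filter_dealUtility_source_eq_singleton A A' i₀ hi₀, card_singleton, Nat.cast_one]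
  have hB : ∀ B, B ≠ A → B ≠ A' → swu (dealUtility A A' i₀) B ≤ swu (dealUtility A A' i₀) A := by
    intro B hBA hBA'
    obtain ⟨j, hj⟩ := exists_dealUtility_eq_zero A A' i₀ hnd hBA hBA'
    have hpos : (1 : ℝ) ≤ #{i | dealUtility A A' i₀ i (bundle B i) = 0} := by
      exact_mod_cast card_pos.mpr ⟨j, by simpa using hj⟩
    rw [hswu, hA]
    linarith
  refine ⟨dealUtility A A' i₀, hdich, ?_, hA, hB, fun B hlt => ?_⟩
  · rw [hswu, filter_dealUtility_target_eq_empty, card_empty, Nat.cast_zero, sub_zero]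
  · by_contra hBA'
    obtain rfl | hBA := eq_or_ne B A
    · exact lt_irrefl _ hlt
    · exact (hB B hBA hBA').not_gt hlt
end

section
/- In additive scenarios (all agents have additive utility functions), if an allocation A does not have maximal utilitarian social welfare, then there exists an individually rational 1-deal from A; consequently, any maximal sequence of individually rational 1-deals terminates in an allocation with maximal utilitarian social welfare. -/
variable {Agent Res : Type*} [Fintype Agent] [Fintype Res] [DecidableEq Agent]

/-- A 1-deal: exactly one resource changes hands. -/
def OneDeal (f g : Res → Agent) : Prop :=
  ∃ r, f r ≠ g r ∧ ∀ r', r' ≠ r → f r' = g r'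

/-! With additive utilities the social welfare is a sum over resources of the value of each
resource to its holder. If `B` has larger welfare than `A`, some resource `r` is worth more
to its holder in `B` than to its holder in `A`, and handing `r` to `B r` alone is already an
improving 1-deal. There is no infinite improving sequence, since welfare strictly increases
along it while only finitely many allocations exist. -/

section Welfare

variable {u : Agent → Finset Res → ℝ}

theorem swu_eq_sum_of_additive (hadd : ∀ i (R : Finset Res), u i R = ∑ r ∈ R, u i {r})
    (f : Res → Agent) : swu u f = ∑ r, u (f r) {r} := by
  unfold swu bundle
  rw [← Finset.sum_fiberwise Finset.univ f fun r => u (f r) {r}]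
  refine Finset.sum_congr rfl fun i _ => ?_
  rw [hadd]
  refine Finset.sum_congr rfl fun r hr => ?_
  rw [(Finset.mem_filter.mp hr).2]

theorem exists_oneDeal_swu_lt_of_additive
    (hadd : ∀ i (R : Finset Res), u i R = ∑ r ∈ R, u i {r}) {A B : Res → Agent}
    (hAB : swu u A < swu u B) : ∃ A', OneDeal A A' ∧ swu u A < swu u A' := by
  classical
  simp only [swu_eq_sum_of_additive hadd] at hAB ⊢
  obtain ⟨r, -, hr⟩ := Finset.exists_lt_of_sum_lt hAB
  have hne : A r ≠ B r := fun h => hr.ne (by rw [h])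
  refine ⟨Function.update A r (B r),
    ⟨r, by rwa [Function.update_self], fun _ h => (Function.update_of_ne h _ _).symm⟩, ?_⟩
  refine Finset.sum_lt_sum (fun r' _ => ?_) ⟨r, Finset.mem_univ r, by simpa using hr⟩
  rcases eq_or_ne r' r with rfl | h
  · simpa using hr.le
  · rw [Function.update_of_ne h]

end Welfare

theorem not_strictMono_comp_of_finite {α β : Type*} [Finite α] [Preorder β] (g : α → β)
    (seq : ℕ → α) : ¬ StrictMono (g ∘ seq) :=
  fun h => not_injective_infinite_finite seq h.injective.of_comp

/-- In additive scenarios: if an allocation does not have maximal utilitarian social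
welfare then some individually rational 1-deal exists from it; moreover there is no
infinite sequence of individually rational 1-deals, and any terminal allocation has
maximal utilitarian social welfare. -/
theorem stmt4 (u : Agent → Finset Res → ℝ)
    (hadd : ∀ i (R : Finset Res), u i R = ∑ r ∈ R, u i {r}) :
    (∀ A : Res → Agent, (∃ B, swu u A < swu u B) →
        ∃ A', OneDeal A A' ∧ swu u A < swu u A') ∧
    (¬ ∃ seq : ℕ → (Res → Agent),
        ∀ n, OneDeal (seq n) (seq (n + 1)) ∧ swu u (seq n) < swu u (seq (n + 1))) ∧
    (∀ A : Res → Agent, (¬ ∃ A', OneDeal A A' ∧ swu u A < swu u A') →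
        ∀ B : Res → Agent, swu u B ≤ swu u A) := by
  refine ⟨fun A ⟨B, hAB⟩ => exists_oneDeal_swu_lt_of_additive hadd hAB, ?_, ?_⟩
  · rintro ⟨seq, hseq⟩
    exact not_strictMono_comp_of_finite (swu u) seq (strictMono_nat_of_lt_succ fun n => (hseq n).2)
  · intro A hA B
    by_contra! hAB
    exact hA (exists_oneDeal_swu_lt_of_additive hadd hAB)
end

section
/- Any maximal sequence of cooperatively rational deals is finite and terminates in a Pareto optimal allocation: an allocation A from which no cooperatively rational deal is possible admits no allocation A' with sw_u(A) < sw_u(A') and uᵢ(A) ≤ uᵢ(A') for all agents i. -/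
variable {Agent Res : Type*} [Fintype Agent] [Fintype Res] [DecidableEq Agent]

/-- Cooperative rationality: no agent loses utility and some agent strictly gains. -/
def CoopRational (u : Agent → Finset Res → ℝ) (A A' : Res → Agent) : Prop :=
  (∀ i, u i (bundle A i) ≤ u i (bundle A' i)) ∧
  ∃ j, u j (bundle A j) < u j (bundle A' j)

/-! Social welfare is a strict potential for cooperatively rational deals; since there are only
finitely many allocations, no infinite sequence of such deals exists. Conversely, a weak Pareto
improvement that raises social welfare must raise some agent's utility, so it is itself a
cooperatively rational deal. -/

theorem CoopRational.swu_lt {u : Agent → Finset Res → ℝ} {A A' : Res → Agent}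
    (h : CoopRational u A A') : swu u A < swu u A' :=
  let ⟨hle, j, hj⟩ := h
  Finset.sum_lt_sum (fun i _ => hle i) ⟨j, Finset.mem_univ j, hj⟩

theorem coopRational_of_swu_lt {u : Agent → Finset Res → ℝ} {A A' : Res → Agent}
    (hle : ∀ i, u i (bundle A i) ≤ u i (bundle A' i)) (hlt : swu u A < swu u A') :
    CoopRational u A A' := by
  obtain ⟨j, -, hj⟩ := Finset.exists_lt_of_sum_lt hlt
  exact ⟨hle, j, hj⟩

theorem injective_of_coopRational_chain {u : Agent → Finset Res → ℝ}
    {seq : ℕ → Res → Agent} (h : ∀ n, CoopRational u (seq n) (seq (n + 1))) :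
    Function.Injective seq :=
  Function.Injective.of_comp (f := swu u)
    (strictMono_nat_of_lt_succ fun n => (h n).swu_lt).injective

/-- Any maximal sequence of cooperatively rational deals is finite and its terminal
allocation is Pareto optimal. -/
theorem stmt7 (u : Agent → Finset Res → ℝ) :
    (¬ ∃ seq : ℕ → (Res → Agent), ∀ n, CoopRational u (seq n) (seq (n + 1))) ∧
    (∀ A : Res → Agent, (¬ ∃ A', CoopRational u A A') →
      ¬ ∃ A' : Res → Agent,
          swu u A < swu u A' ∧ ∀ i, u i (bundle A i) ≤ u i (bundle A' i)) := by
  refine ⟨?_, ?_⟩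
  · rintro ⟨seq, hseq⟩
    exact not_injective_infinite_finite seq (injective_of_coopRational_chain hseq)
  · rintro A hA ⟨A', hlt, hle⟩
    exact hA ⟨A', coopRational_of_swu_lt hle hlt⟩
end

section
/- In 0-1 scenarios (all utility functions additive with uᵢ({r}) ∈ {0,1} for every resource r), if an allocation A does not have maximal utilitarian social welfare, then there exist a resource r and agents i, j such that r ∈ A(i), uᵢ({r}) = 0 and u_j({r}) = 1, hence moving r from i to j is a cooperatively rational 1-deal; consequently, any maximal sequence of cooperatively rational 1-deals terminates in an allocation with maximal utilitarian social welfare. -/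
/-!
Under additivity the social welfare of an allocation is `∑ r, u (A r) {r}`, so an allocation with
larger welfare gives some resource `r` to an agent valuing it more than its current holder does.
In a 0-1 scenario the holder values `r` at 0 and the new agent at 1, so handing `r` over costs
nobody anything and strictly benefits the receiver.
-/

variable {Agent Res : Type*} [Fintype Agent] [Fintype Res] [DecidableEq Agent] [DecidableEq Res]

section

variable {ι α : Type*}

lemma utility_bundle_eq_sum_ite [Fintype α] [DecidableEq ι] {u : ι → Finset α → ℝ}
    (hadd : ∀ i (R : Finset α), u i R = ∑ r ∈ R, u i {r}) (f : α → ι) (i : ι) :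
    u i (bundle f i) = ∑ r, if f r = i then u i {r} else 0 := by
  rw [hadd, bundle, Finset.sum_filter]

lemma swu_eq_sum_singleton [Fintype ι] [Fintype α] [DecidableEq ι] {u : ι → Finset α → ℝ}
    (hadd : ∀ i (R : Finset α), u i R = ∑ r ∈ R, u i {r}) (f : α → ι) :
    swu u f = ∑ r, u (f r) {r} := by
  simp only [swu, utility_bundle_eq_sum_ite hadd]
  rw [Finset.sum_comm]
  simp

lemma exists_lt_singleton_of_swu_lt [Fintype ι] [Fintype α] [DecidableEq ι]
    {u : ι → Finset α → ℝ} (hadd : ∀ i (R : Finset α), u i R = ∑ r ∈ R, u i {r})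
    {A B : α → ι} (h : swu u A < swu u B) : ∃ r, u (A r) {r} < u (B r) {r} := by
  rw [swu_eq_sum_singleton hadd, swu_eq_sum_singleton hadd] at h
  obtain ⟨r, -, hr⟩ := Finset.exists_lt_of_sum_lt h
  exact ⟨r, hr⟩

lemma oneDeal_update [DecidableEq α] {f : α → ι} {a : α} {b : ι} (h : f a ≠ b) :
    OneDeal f (Function.update f a b) :=
  ⟨a, by simpa using h, fun _ ha' => (Function.update_of_ne ha' _ _).symm⟩

lemma coopRational_update [Fintype α] [DecidableEq ι] [DecidableEq α] {u : ι → Finset α → ℝ}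
    (hadd : ∀ i (R : Finset α), u i R = ∑ r ∈ R, u i {r}) {A : α → ι} {r : α} {j : ι}
    (hlose : u (A r) {r} ≤ 0) (hgain : 0 < u j {r}) :
    CoopRational u A (Function.update A r j) := by
  have hne : A r ≠ j := fun h => (h ▸ hlose).not_gt hgain
  simp only [CoopRational, utility_bundle_eq_sum_ite hadd]
  refine ⟨fun i => Finset.sum_le_sum fun r' _ => ?_,
    j, Finset.sum_lt_sum (fun r' _ => ?_) ⟨r, Finset.mem_univ r, ?_⟩⟩
  · rcases eq_or_ne r' r with rfl | hr'
    · grind [Function.update_self]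
    · simp [Function.update_of_ne hr']
  · rcases eq_or_ne r' r with rfl | hr'
    · simp [hne, hgain.le]
    · simp [Function.update_of_ne hr']
  · simpa [hne] using hgain

lemma exists_zero_one_deal_of_swu_lt [Fintype ι] [Fintype α] [DecidableEq ι] [DecidableEq α]
    {u : ι → Finset α → ℝ} (hadd : ∀ i (R : Finset α), u i R = ∑ r ∈ R, u i {r})
    (h01 : ∀ i (r : α), u i {r} = 0 ∨ u i {r} = 1) {A B : α → ι} (hB : swu u A < swu u B) :
    ∃ (r : α) (j : ι), u (A r) {r} = 0 ∧ u j {r} = 1 ∧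
      OneDeal A (Function.update A r j) ∧ CoopRational u A (Function.update A r j) := by
  obtain ⟨r, hr⟩ := exists_lt_singleton_of_swu_lt hadd hB
  have hvals : u (A r) {r} = 0 ∧ u (B r) {r} = 1 := by grind
  have hne : A r ≠ B r := fun h => by simp [h, hvals.2] at hvals
  exact ⟨r, B r, hvals.1, hvals.2, oneDeal_update hne,
    coopRational_update hadd hvals.1.le (by simp [hvals.2])⟩

end

/-- 0-1 scenarios: if an allocation is not of maximal utilitarian social welfare then some
agent holds a resource it values at 0 which another agent values at 1, and moving that
resource is a cooperatively rational 1-deal; consequently any terminal allocation for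
cooperatively rational 1-deals has maximal utilitarian social welfare. -/
theorem stmt8 (u : Agent → Finset Res → ℝ)
    (hadd : ∀ i (R : Finset Res), u i R = ∑ r ∈ R, u i {r})
    (h01 : ∀ i (r : Res), u i {r} = 0 ∨ u i {r} = 1) :
    (∀ A : Res → Agent, (∃ B, swu u A < swu u B) →
        ∃ (r : Res) (j : Agent), u (A r) {r} = 0 ∧ u j {r} = 1 ∧
          OneDeal A (Function.update A r j) ∧
          CoopRational u A (Function.update A r j)) ∧
    (∀ A : Res → Agent, (¬ ∃ A', OneDeal A A' ∧ CoopRational u A A') →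
        ∀ B : Res → Agent, swu u B ≤ swu u A) := by
  refine ⟨fun A ⟨B, hB⟩ => exists_zero_one_deal_of_swu_lt hadd h01 hB, fun A hterminal B => ?_⟩
  by_contra! h
  obtain ⟨r, j, -, -, hdeal, hcoop⟩ := exists_zero_one_deal_of_swu_lt hadd h01 h
  exact hterminal ⟨_, hdeal, hcoop⟩
end

section
/- Every Pigou-Dalton transfer is an equitable deal: if deal δ = (A, A') involves exactly two agents i and j, is mean-preserving (uᵢ(A)+u_j(A) = uᵢ(A')+u_j(A')), and reduces inequality (|uᵢ(A')−u_j(A')| < |uᵢ(A)−u_j(A)|), then min{uᵢ(A), u_j(A)} < min{uᵢ(A'), u_j(A')}. -/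
variable {Agent Res : Type*} [Fintype Agent] [Fintype Res] [DecidableEq Agent]

theorem min_lt_min_of_add_eq_of_abs_sub_lt {α : Type*} [AddCommGroup α] [LinearOrder α]
    [IsOrderedAddMonoid α] {a b c d : α} (hsum : a + b = c + d) (habs : |c - d| < |a - b|) :
    min a b < min c d := by
  have two_nsmul_min (x y : α) : 2 • min x y = x + y - |x - y| := by
    rw [abs_sub_comm]
    exact two_nsmul_inf_eq_add_sub_abs_sub x y
  refine lt_of_nsmul_lt_nsmul_right 2 ?_
  rw [two_nsmul_min, two_nsmul_min, hsum]
  exact sub_lt_sub_left habs _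

theorem stmt9_general (u : Agent → Finset Res → ℝ) (A A' : Res → Agent) (i j : Agent)
    (hmean : u i (bundle A i) + u j (bundle A j) = u i (bundle A' i) + u j (bundle A' j))
    (hineq : |u i (bundle A' i) - u j (bundle A' j)| < |u i (bundle A i) - u j (bundle A j)|) :
    min (u i (bundle A i)) (u j (bundle A j)) <
      min (u i (bundle A' i)) (u j (bundle A' j)) :=
  min_lt_min_of_add_eq_of_abs_sub_lt hmean hineq

/-- Every Pigou-Dalton transfer is an equitable deal: a mean-preserving,
inequality-reducing deal involving exactly two agents strictly increases the minimum
utility among the two agents involved. -/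
theorem stmt9 (u : Agent → Finset Res → ℝ) (A A' : Res → Agent) (i j : Agent)
    (hij : i ≠ j)
    (hinv : ∀ k, k ≠ i → k ≠ j → bundle A k = bundle A' k)
    (hi : bundle A i ≠ bundle A' i) (hj : bundle A j ≠ bundle A' j)
    (hmean : u i (bundle A i) + u j (bundle A j) = u i (bundle A' i) + u j (bundle A' j))
    (hineq : |u i (bundle A' i) - u j (bundle A' j)| < |u i (bundle A i) - u j (bundle A j)|) :
    min (u i (bundle A i)) (u j (bundle A j)) <
      min (u i (bundle A' i)) (u j (bundle A' j)) :=
  stmt9_general u A A' i j hmean hineq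
end

section
/- Maximin-rise implies equitability: if allocations A and A' satisfy sw_e(A) < sw_e(A'), where sw_e(A) = min_{i∈𝒜} uᵢ(A(i)), then the deal (A, A') is equitable, i.e., min{uᵢ(A(i)) | i ∈ 𝒜^δ} < min{uᵢ(A'(i)) | i ∈ 𝒜^δ}, where 𝒜^δ = {i | A(i) ≠ A'(i)}. -/
/-!
An agent attaining the minimum utility under `A` must take part in the deal: otherwise their
utility is unchanged and would bound `swe u A'` by `swe u A`. Hence the minimum over the deal
under `A` is at most `swe u A < swe u A'`, which in turn bounds the minimum over the deal under `A'`.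
-/

variable {Agent Res : Type*} [Fintype Agent] [Fintype Res] [DecidableEq Agent] [DecidableEq Res] [Nonempty Agent]

/-- Egalitarian social welfare: the utility of the worst-off agent. -/
def swe (u : Agent → Finset Res → ℝ) (f : Res → Agent) : ℝ :=
  Finset.univ.inf' Finset.univ_nonempty fun i => u i (bundle f i)

theorem Finset.inf'_lt_inf'_of_lt_of_eqOn_sdiff {ι β : Type*} [LinearOrder β] {s t : Finset ι}
    (hst : s ⊆ t) (hs : s.Nonempty) {f g : ι → β} (hfg : ∀ i ∈ t, i ∉ s → f i = g i)
    (h : t.inf' (hs.mono hst) f < t.inf' (hs.mono hst) g) :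
    s.inf' hs f < s.inf' hs g := by
  obtain ⟨j, hjt, hj⟩ := t.exists_mem_eq_inf' (hs.mono hst) f
  have hjs : j ∈ s := by
    by_contra hjs
    have hgj : t.inf' (hs.mono hst) g ≤ f j := hfg j hjt hjs ▸ t.inf'_le g hjt
    exact (h.trans_le hgj).ne hj
  calc s.inf' hs f ≤ f j := s.inf'_le f hjs
    _ = t.inf' (hs.mono hst) f := hj.symm
    _ < t.inf' (hs.mono hst) g := h
    _ ≤ s.inf' hs g := Finset.inf'_mono g hst hs

/-- Maximin-rise implies equitability: if egalitarian social welfare strictly increases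
from A to A', then the minimum utility among the agents involved in the deal (those whose
bundle changes) strictly increases. -/
theorem stmt10 (u : Agent → Finset Res → ℝ) (A A' : Res → Agent)
    (hD : (Finset.univ.filter fun i => bundle A i ≠ bundle A' i).Nonempty)
    (h : swe u A < swe u A') :
    (Finset.univ.filter fun i => bundle A i ≠ bundle A' i).inf' hD
        (fun i => u i (bundle A i)) <
      (Finset.univ.filter fun i => bundle A i ≠ bundle A' i).inf' hD
        (fun i => u i (bundle A' i)) := by
  refine Finset.inf'_lt_inf'_of_lt_of_eqOn_sdiff (Finset.subset_univ _) hD ?_ h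
  intro i _ hi
  rw [Finset.mem_filter, not_and, not_not] at hi
  rw [hi (Finset.mem_univ i)]
end

section
/- Equitability implies leximin-rise: if δ = (A, A') is an equitable deal, then A ≺ A' in the leximin ordering, i.e., the ordered (non-decreasing) utility vector of A lexicographically precedes that of A'. -/
variable {Agent Res : Type*} [Fintype Agent] [Fintype Res] [DecidableEq Agent] [DecidableEq Res]

/-- The ordered utility vector: the utilities of all agents sorted increasingly. -/
noncomputable def vec (u : Agent → Finset Res → ℝ) (f : Res → Agent) : List ℝ :=
  (Finset.univ.val.map fun i => u i (bundle f i)).sort (· ≤ ·)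

/-- A deal is equitable iff the minimum utility among the (nonempty set of) agents whose
bundle changes strictly increases. -/
def Equitable (u : Agent → Finset Res → ℝ) (A A' : Res → Agent) : Prop :=
  ∃ hD : (Finset.univ.filter fun i => bundle A i ≠ bundle A' i).Nonempty,
    (Finset.univ.filter fun i => bundle A i ≠ bundle A' i).inf' hD
        (fun i => u i (bundle A i)) <
      (Finset.univ.filter fun i => bundle A i ≠ bundle A' i).inf' hD
        (fun i => u i (bundle A' i))

/-! Only agents whose bundle changes can change utility; let `m` be their old minimum utility.
No agent's utility crosses a level below `m`, and at level `m` the deal loses a minimising agent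
(its new utility is at least the new minimum, which exceeds `m`) and gains none. So the two
sorted utility vectors agree on all entries below `m`, and the old one then has more copies
of `m`, which is where it falls lexicographically below the new one. -/

section

variable {α ι : Type*} [LinearOrder α]

theorem List.lex_lt_of_sorted_of_count_lt (m : α) {l l' : List α}
    (hl : l.Pairwise (· ≤ ·)) (hl' : l'.Pairwise (· ≤ ·)) (hlen : l.length ≤ l'.length)
    (hbelow : ∀ x < m, l.count x = l'.count x) (hm : l'.count m < l.count m) :
    List.Lex (· < ·) l l' := by
  induction l generalizing l' with
  | nil => simp at hm
  | cons a t ih =>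
    obtain _ | ⟨b, t'⟩ := l'
    · simp at hlen
    rw [List.pairwise_cons] at hl hl'
    have ham : a ≤ m := by
      obtain rfl | hmt := List.mem_cons.mp (List.count_pos_iff.mp (by omega : 0 < (a :: t).count m))
      exacts [le_rfl, hl.1 m hmt]
    have hab : a ≤ b := by
      rcases lt_or_ge b m with hbm | hmb
      · have hb : b ∈ a :: t := List.count_pos_iff.mp (by rw [hbelow b hbm]; simp)
        obtain rfl | hbt := List.mem_cons.mp hb
        exacts [le_rfl, hl.1 b hbt]
      · exact ham.trans hmb
    obtain rfl | hab := hab.eq_or_lt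
    · refine List.Lex.cons (ih hl.2 hl'.2 (by simpa using hlen) (fun x hx => ?_) ?_)
      · have := hbelow x hx
        simp only [List.count_cons] at this
        omega
      · simp only [List.count_cons] at hm
        omega
    · exact List.Lex.rel hab

variable [Fintype ι]

theorem count_sort_map_univ (v : ι → α) (x : α) :
    ((Finset.univ.val.map v).sort (· ≤ ·)).count x = (Finset.univ.filter fun i => x = v i).card := by
  rw [← Multiset.coe_count, Multiset.sort_eq, Multiset.count_map]
  rfl

theorem lex_sort_map_of_inf'_lt (v v' : ι → α) (D : Finset ι) (hD : D.Nonempty)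
    (hoff : ∀ i ∉ D, v i = v' i) (hlt : D.inf' hD v < D.inf' hD v') :
    List.Lex (· < ·) ((Finset.univ.val.map v).sort (· ≤ ·))
      ((Finset.univ.val.map v').sort (· ≤ ·)) := by
  set m := D.inf' hD v
  have hnew : ∀ i x, x ≤ m → x = v' i → x = v i := by
    intro i x hx hxi
    by_cases hi : i ∈ D
    · exact absurd (Finset.inf'_le v' hi) (by order)
    · rw [hoff i hi, hxi]
  have hold : ∀ i x, x < m → x = v i → x = v' i := by
    intro i x hx hxi
    by_cases hi : i ∈ D
    · exact absurd (Finset.inf'_le v hi) (by order)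
    · rw [← hoff i hi, hxi]
  apply List.lex_lt_of_sorted_of_count_lt m (Multiset.pairwise_sort _ _)
    (Multiset.pairwise_sort _ _) (by simp)
  · intro x hx
    simp only [count_sort_map_univ]
    congr 1
    exact Finset.filter_congr fun i _ => ⟨hold i x hx, hnew i x hx.le⟩
  · simp only [count_sort_map_univ]
    have hsub : (Finset.univ.filter fun i => m = v' i) ⊆ Finset.univ.filter fun i => m = v i :=
      Finset.monotone_filter_right _ fun i _ => hnew i m le_rfl
    refine Finset.card_lt_card ((Finset.ssubset_iff_of_subset hsub).mpr ?_)
    obtain ⟨i₀, hi₀, hmi₀⟩ := Finset.exists_mem_eq_inf' hD v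
    refine ⟨i₀, by simpa using hmi₀, ?_⟩
    simpa using (hlt.trans_le (Finset.inf'_le v' hi₀)).ne

end

/-- Equitability implies leximin-rise: the sorted utility vector of A strictly
lexicographically precedes that of A'. -/
theorem stmt11 (u : Agent → Finset Res → ℝ) (A A' : Res → Agent)
    (h : Equitable u A A') :
    List.Lex (· < ·) (vec u A) (vec u A') := by
  obtain ⟨hD, hlt⟩ := h
  exact lex_sort_map_of_inf'_lt _ _ _ hD (fun i hi => congrArg (u i) (by simpa using hi)) hlt
end

section
/- Any maximal sequence of equitable deals is finite and terminates in an allocation with maximal egalitarian social welfare sw_e(A) = min_{i∈𝒜} uᵢ(A(i)). -/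
variable {Agent Res : Type*} [Fintype Agent] [Fintype Res] [DecidableEq Agent] [DecidableEq Res] [Nonempty Agent]

/-!
An equitable deal strictly increases the leximin order on utility profiles: the utilities of the
agents it involves are all replaced by values above the worst of the old ones. This is an instance
of the Dershowitz–Manna order on multisets, which is transitive and irreflexive, hence
well-founded on the finite set of allocations. Terminal allocations maximise egalitarian welfare
because moving from `A` to any `B` with `swe u A < swe u B` is itself equitable: an agent worst
off in `A` must change bundle.
-/

lemma Multiset.isDershowitzMannaLT_irrefl {α : Type*} [Preorder α] (M : Multiset α) :
    ¬ M.IsDershowitzMannaLT M := by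
  classical
  rintro ⟨X, Y, Z, hZ, hM, hM', hYZ⟩
  obtain rfl : Y = Z := add_right_injective X (hM.symm.trans hM')
  obtain ⟨y, hyY, hy⟩ := Y.toFinset.exists_maximal (by simpa using hZ)
  obtain ⟨z, hzY, hyz⟩ := hYZ y (by simpa using hyY)
  exact hyz.not_ge (hy (by simpa using hzY) hyz.le)

/-- The order is reversed so that the Dershowitz–Manna order on these multisets is the leximin
order. -/
def utilityMultiset (u : Agent → Finset Res → ℝ) (A : Res → Agent) : Multiset ℝᵒᵈ :=
  Finset.univ.val.map fun i => OrderDual.toDual (u i (bundle A i))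

omit [Nonempty Agent] in
lemma Equitable.isDershowitzMannaLT {u : Agent → Finset Res → ℝ} {A A' : Res → Agent}
    (h : Equitable u A A') :
    (utilityMultiset u A').IsDershowitzMannaLT (utilityMultiset u A) := by
  obtain ⟨hD, hlt⟩ := h
  set D := Finset.univ.filter fun i => bundle A i ≠ bundle A' i
  have hsplit (B : Res → Agent) : utilityMultiset u B =
      (Finset.univ.val.filter fun i => ¬ bundle A i ≠ bundle A' i).map
        (fun i => OrderDual.toDual (u i (bundle B i))) +
      D.val.map fun i => OrderDual.toDual (u i (bundle B i)) := by
    rw [utilityMultiset, add_comm, ← Multiset.map_add, Finset.filter_val,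
      Multiset.filter_add_not]
  refine ⟨_, D.val.map fun i => OrderDual.toDual (u i (bundle A' i)),
    D.val.map fun i => OrderDual.toDual (u i (bundle A i)), by simpa using hD.ne_empty,
    hsplit A', ?_, ?_⟩
  · rw [hsplit A]
    congr 1
    refine Multiset.map_congr rfl fun i hi => ?_
    have hAi : bundle A i = bundle A' i := not_not.1 (Multiset.mem_filter.1 hi).2
    rw [hAi]
  · simp only [Multiset.mem_map, Finset.mem_val, forall_exists_index, and_imp,
      forall_apply_eq_imp_iff₂, exists_exists_and_eq_and]
    intro i hi
    obtain ⟨j, hj, hjmin⟩ := D.exists_mem_eq_inf' hD fun i => u i (bundle A i)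
    refine ⟨j, hj, OrderDual.toDual_lt_toDual.2 ?_⟩
    calc u j (bundle A j) = _ := hjmin.symm
      _ < _ := hlt
      _ ≤ u i (bundle A' i) := D.inf'_le _ hi

omit [Nonempty Agent] in
lemma wellFounded_flip_equitable (u : Agent → Finset Res → ℝ) :
    WellFounded (flip (Equitable u)) :=
  have : IsTrans (Res → Agent) fun A' A =>
      (utilityMultiset u A').IsDershowitzMannaLT (utilityMultiset u A) :=
    ⟨fun _ _ _ => Multiset.IsDershowitzMannaLT.trans⟩
  have : Std.Irrefl fun A' A : Res → Agent =>
      (utilityMultiset u A').IsDershowitzMannaLT (utilityMultiset u A) :=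
    ⟨fun A => Multiset.isDershowitzMannaLT_irrefl (utilityMultiset u A)⟩
  Subrelation.wf Equitable.isDershowitzMannaLT
    (Finite.wellFounded_of_trans_of_irrefl _)

lemma equitable_of_swe_lt {u : Agent → Finset Res → ℝ} {A B : Res → Agent}
    (h : swe u A < swe u B) : Equitable u A B := by
  obtain ⟨j, -, hj⟩ := Finset.univ.exists_mem_eq_inf' Finset.univ_nonempty
    fun i => u i (bundle A i)
  have hB (i : Agent) : swe u B ≤ u i (bundle B i) := Finset.inf'_le _ (Finset.mem_univ i)
  have hjD : j ∈ Finset.univ.filter fun i => bundle A i ≠ bundle B i := by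
    refine Finset.mem_filter.2 ⟨Finset.mem_univ j, fun hsame => ?_⟩
    exact (h.trans_le (hsame ▸ hB j)).ne' hj.symm
  refine ⟨⟨j, hjD⟩, ?_⟩
  calc _ ≤ u j (bundle A j) := Finset.inf'_le _ hjD
    _ = swe u A := hj.symm
    _ < swe u B := h
    _ ≤ _ := Finset.le_inf' _ _ fun i _ => hB i

/-- Any maximal sequence of equitable deals is finite and terminates in an allocation
with maximal egalitarian social welfare. -/
theorem stmt12 (u : Agent → Finset Res → ℝ) :
    (¬ ∃ seq : ℕ → (Res → Agent), ∀ n, Equitable u (seq n) (seq (n + 1))) ∧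
    (∀ A : Res → Agent, (¬ ∃ A', Equitable u A A') →
      ∀ B : Res → Agent, swe u B ≤ swe u A) := by
  refine ⟨fun ⟨seq, hseq⟩ => ?_, fun A hA B => ?_⟩
  · exact (wellFounded_iff_isEmpty_descending_chain.1 (wellFounded_flip_equitable u)).elim
      ⟨seq, hseq⟩
  · by_contra! h
    exact hA ⟨B, equitable_of_swe_lt h⟩
end

section
/- Every Pigou-Dalton transfer yields a Lorenz improvement: if deal (A, A') involves exactly two agents i and j (all other agents' utilities unchanged), is mean-preserving (uᵢ(A)+u_j(A) = uᵢ(A')+u_j(A')), and reduces inequality (|uᵢ(A')−u_j(A')| < |uᵢ(A)−u_j(A)|), then A is Lorenz dominated by A'. -/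
variable {Agent Res : Type*} [Fintype Agent] [Fintype Res] [DecidableEq Agent]

noncomputable def LorenzDom (u : Agent → Finset Res → ℝ) (A A' : Res → Agent) : Prop :=
  (∀ k, ((vec u A).take k).sum ≤ ((vec u A').take k).sum) ∧
  ∃ k, ((vec u A).take k).sum < ((vec u A').take k).sum

/-!
The sum of the `k` smallest entries of a multiset is the least sum of a sub-multiset of size `k`.
A transfer `(a, b) ↦ (a', b')` with `a ≤ b`, `a + b = a' + b'` and `|a' - b'| < b - a` has
`a < a'` and `a < b'`, so every sub-multiset after the transfer is matched by one before it of
the same size and no larger sum: replace a lone `a'` or `b'` by `a`, and the pair by `a, b`.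
Equality of all these partial sums would make the sorted lists, hence the multisets, equal,
which the count of `a` rules out.
-/

theorem List.sum_take_cons_le {α : Type*} [AddCommMonoid α] [LinearOrder α]
    [IsOrderedAddMonoid α]
    {a : α} {l : List α} (ha : ∀ b ∈ l, a ≤ b) {k : ℕ} (hk : k ≤ l.length) :
    ((a :: l).take k).sum ≤ (l.take k).sum := by
  cases k with
  | zero => simp
  | succ m =>
    rw [take_succ_cons, sum_cons, sum_take_succ l m hk, add_comm]
    exact add_le_add_right (ha _ (getElem_mem hk)) _

theorem List.sum_take_length_le_of_sublist {α : Type*} [AddCommMonoid α] [LinearOrder α]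
    [IsOrderedAddMonoid α] {t l : List α} (h : t.Sublist l) (hl : l.Pairwise (· ≤ ·)) :
    (l.take t.length).sum ≤ t.sum := by
  induction h with
  | slnil => simp
  | cons a h ih =>
    rw [pairwise_cons] at hl
    exact (sum_take_cons_le hl.1 h.length_le).trans (ih hl.2)
  | cons_cons a _ ih =>
    rw [length_cons, take_succ_cons, sum_cons, sum_cons]
    exact add_le_add_right (ih (pairwise_cons.1 hl).2) a

theorem Multiset.le_cons_iff {α : Type*} [DecidableEq α] {s t : Multiset α} {a : α} :
    s ≤ a ::ₘ t ↔ s ≤ t ∨ ∃ r ≤ t, s = a ::ₘ r := by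
  refine ⟨fun h => ?_, ?_⟩
  · by_cases ha : a ∈ s
    · refine .inr ⟨s.erase a, ?_, (cons_erase ha).symm⟩
      rwa [← cons_le_cons_iff a, cons_erase ha]
    · exact .inl ((le_cons_of_notMem ha).1 h)
  · rintro (h | ⟨r, hr, rfl⟩)
    · exact h.trans (le_cons_self t a)
    · exact cons_le_cons a hr

theorem Finset.val_map_eq_cons_cons {ι β : Type*} [DecidableEq ι] {s : Finset ι} (f : ι → β)
    {i j : ι} (hi : i ∈ s) (hj : j ∈ s) (hij : i ≠ j) :
    s.val.map f = f i ::ₘ f j ::ₘ ((s.erase i).erase j).val.map f := by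
  rw [← Multiset.map_cons, ← Multiset.map_cons, erase_val, erase_val,
    Multiset.cons_erase ((Multiset.mem_erase_of_ne hij.symm).2 hj), Multiset.cons_erase hi]

noncomputable def sumLowest (k : ℕ) (M : Multiset ℝ) : ℝ := ((M.sort (· ≤ ·)).take k).sum

section sumLowest

open Multiset

theorem sumLowest_card_le_sum {M T : Multiset ℝ} (h : T ≤ M) :
    sumLowest (card T) M ≤ T.sum := by
  have hsub : (T.sort (· ≤ ·)).Sublist (M.sort (· ≤ ·)) := by
    refine List.sublist_of_subperm_of_pairwise ?_ (pairwise_sort _ _) (pairwise_sort _ _)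
    rwa [← coe_le, sort_eq, sort_eq]
  have h := List.sum_take_length_le_of_sublist hsub (pairwise_sort _ _)
  rwa [length_sort, ← sum_coe (T.sort _), sort_eq] at h

theorem exists_le_sum_eq_sumLowest (M : Multiset ℝ) (k : ℕ) :
    ∃ T ≤ M, card T = min k (card M) ∧ T.sum = sumLowest k M := by
  refine ⟨(M.sort (· ≤ ·)).take k, ?_, by simp, rfl⟩
  conv_rhs => rw [← sort_eq M (· ≤ ·)]
  exact coe_le.2 (List.take_sublist _ _).subperm

theorem sumLowest_min_card (k : ℕ) (M : Multiset ℝ) :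
    sumLowest (min k (card M)) M = sumLowest k M := by
  rw [sumLowest, sumLowest, ← length_sort (· ≤ ·), ← List.take_eq_take_min]

theorem sumLowest_le_of_forall_exists {M M' : Multiset ℝ} (hcard : card M = card M')
    (h : ∀ T' ≤ M', ∃ T ≤ M, card T = card T' ∧ T.sum ≤ T'.sum) (k : ℕ) :
    sumLowest k M ≤ sumLowest k M' := by
  obtain ⟨T', hT'M', hT'card, hT'sum⟩ := exists_le_sum_eq_sumLowest M' k
  obtain ⟨T, hTM, hTcard, hTsum⟩ := h T' hT'M'
  calc sumLowest k M = sumLowest (card T) M := by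
        rw [hTcard, hT'card, ← hcard, sumLowest_min_card]
    _ ≤ T.sum := sumLowest_card_le_sum hTM
    _ ≤ T'.sum := hTsum
    _ = sumLowest k M' := hT'sum

theorem eq_of_forall_sumLowest_eq {M M' : Multiset ℝ} (hcard : card M = card M')
    (h : ∀ k, sumLowest k M = sumLowest k M') : M = M' := by
  rw [← sort_eq M (· ≤ ·), ← sort_eq M' (· ≤ ·)]
  congr 1
  refine List.ext_getElem (by simpa using hcard) fun n hn hn' => ?_
  have hsucc := h (n + 1)
  rw [sumLowest, sumLowest, List.sum_take_succ _ _ hn, List.sum_take_succ _ _ hn'] at hsucc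
  exact add_left_cancel (congrArg (· + _) (h n) |>.trans hsucc.symm) |>.symm

theorem exists_le_cons_cons_sum_le {a b a' b' : ℝ} (ha : a ≤ a') (hb : a ≤ b')
    (hs : a + b = a' + b') {M₀ T' : Multiset ℝ} (hT' : T' ≤ a' ::ₘ b' ::ₘ M₀) :
    ∃ T ≤ a ::ₘ b ::ₘ M₀, card T = card T' ∧ T.sum ≤ T'.sum := by
  rcases le_cons_iff.1 hT' with hT' | ⟨S, hS, rfl⟩
  · rcases le_cons_iff.1 hT' with hR | ⟨R, hR, rfl⟩
    · exact ⟨T', hR.trans ((le_cons_self _ _).trans (le_cons_self _ _)), rfl, le_rfl⟩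
    · exact ⟨a ::ₘ R, cons_le_cons _ (hR.trans (le_cons_self _ _)), by simp, by simpa⟩
  · rcases le_cons_iff.1 hS with hR | ⟨R, hR, rfl⟩
    · exact ⟨a ::ₘ S, cons_le_cons _ (hR.trans (le_cons_self _ _)), by simp, by simpa⟩
    · exact ⟨a ::ₘ b ::ₘ R, cons_le_cons _ (cons_le_cons _ hR), by simp, by simp only [sum_cons]; linarith⟩

theorem sumLowest_le_and_exists_lt_of_transfer (M₀ : Multiset ℝ) {a b a' b' : ℝ}
    (hs : a + b = a' + b') (hd : |a' - b'| < |a - b|) :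
    (∀ k, sumLowest k (a ::ₘ b ::ₘ M₀) ≤ sumLowest k (a' ::ₘ b' ::ₘ M₀)) ∧
      ∃ k, sumLowest k (a ::ₘ b ::ₘ M₀) < sumLowest k (a' ::ₘ b' ::ₘ M₀) := by
  wlog hab : a ≤ b generalizing a b
  · rw [cons_swap a]
    exact this (by linarith) (by rwa [abs_sub_comm b a]) (le_of_not_ge hab)
  rw [abs_of_nonpos (by linarith : a - b ≤ 0), abs_lt] at hd
  have ha' : a < a' := by linarith
  have hb' : a < b' := by linarith
  have hcard : card (a ::ₘ b ::ₘ M₀) = card (a' ::ₘ b' ::ₘ M₀) := by simp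
  have hle := sumLowest_le_of_forall_exists hcard
    fun _ hT' => exists_le_cons_cons_sum_le ha'.le hb'.le hs hT'
  refine ⟨hle, ?_⟩
  by_contra! hge
  have hcount := congrArg (count a) <|
    eq_of_forall_sumLowest_eq hcard fun k => (hle k).antisymm (hge k)
  rw [count_cons_self, count_cons_of_ne ha'.ne, count_cons_of_ne hb'.ne] at hcount
  have := count_le_of_le a (le_cons_self M₀ b)
  omega

end sumLowest

/-- Every Pigou-Dalton transfer yields a Lorenz improvement. -/
theorem stmt15 (u : Agent → Finset Res → ℝ) (A A' : Res → Agent) (i j : Agent)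
    (hij : i ≠ j)
    (hoth : ∀ k, k ≠ i → k ≠ j → u k (bundle A k) = u k (bundle A' k))
    (hmean : u i (bundle A i) + u j (bundle A j) = u i (bundle A' i) + u j (bundle A' j))
    (hineq : |u i (bundle A' i) - u j (bundle A' j)| < |u i (bundle A i) - u j (bundle A j)|) :
    LorenzDom u A A' := by
  have hsplit (B : Res → Agent) := Finset.univ.val_map_eq_cons_cons
    (fun k => u k (bundle B k)) (Finset.mem_univ i) (Finset.mem_univ j) hij
  have hrest : ((Finset.univ.erase i).erase j).val.map (fun k => u k (bundle A k)) =
      ((Finset.univ.erase i).erase j).val.map (fun k => u k (bundle A' k)) :=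
    Multiset.map_congr rfl fun k hk =>
      hoth k (Finset.ne_of_mem_erase (Finset.mem_of_mem_erase hk)) (Finset.ne_of_mem_erase hk)
  unfold LorenzDom vec
  rw [hsplit A, hsplit A', ← hrest]
  exact sumLowest_le_and_exists_lt_of_transfer _ hmean hineq
end
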